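/- arXiv:math/0404043 — 3 statements merged into one kernel-verified Lean document; each statement's English description precedes it below -/
import Mathlib

section
/- Let γ be a finite walk in a finite graph G from v to w with v ≠ w, and let T(γ) be the subgraph consisting of the edges {γ(i), γ(i+1)} for those i such that γ(i+1) is not equal to γ(j) for any j ≤ i. Then the unique self-avoiding path from w to v in T(γ) (assuming T(γ) restricted to the vertices visited by γ is a tree) equals the loop-erasure LE(γ') of the time-reversed walk γ'. -/
/-- One step of chronological loop-erasure: append the next vertex `x` to the partially
loop-erased path `acc`; if `x` already occurs in `acc`, erase the loop, i.e. truncate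
`acc` back to (and including) the first occurrence of `x`. -/
def loopEraseStep {V : Type*} [DecidableEq V] (acc : List V) (x : V) : List V :=
  if x ∈ acc then acc.takeWhile (· ≠ x) ++ [x] else acc ++ [x]

/-- Chronological loop-erasure `LE` of a walk, given as its list of visited vertices:
scan the walk from the beginning, erasing each loop as soon as it is closed. -/
def loopErase {V : Type*} [DecidableEq V] (l : List V) : List V :=
  l.foldl loopEraseStep []


/-- The first-entry (oriented) edges of a walk `l`: the pair `(a, b)` is such an edge when
`a = l(i)`, `b = l(i+1)` for some `i` such that `l(i+1)` differs from `l(j)` for all `j ≤ i`. -/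
def feEdge {V : Type*} [DecidableEq V] (l : List V) (a b : V) : Prop :=
  ∃ i, l[i]? = some a ∧ l[i + 1]? = some b ∧ b ∉ l.take (i + 1)

/-- The first-entry subgraph `T(γ)` of a walk `l`: for each vertex other than the start
visited by `l`, it contains the edge along which `l` first entered that vertex. -/
def feGraph {V : Type*} [DecidableEq V] (l : List V) : SimpleGraph V where
  Adj a b := a ≠ b ∧ (feEdge l a b ∨ feEdge l b a)
  symm := ⟨fun a b h => ⟨h.1.symm, h.2.symm⟩⟩
  loopless := ⟨fun a h => h.1 rfl⟩

section Aux

variable {V : Type*} [DecidableEq V]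

/-- Last-exit (oriented) edge of a walk `l`: `b` immediately follows the last occurrence
of `a`. -/
def lastExit (l : List V) (a b : V) : Prop :=
  ∃ j, l[j]? = some a ∧ l[j + 1]? = some b ∧ a ∉ l.drop (j + 1)

lemma lastExit_append (u t : List V) {a b : V} (h : lastExit t a b) :
    lastExit (u ++ t) a b := by
  obtain ⟨j, h1, h2, h3⟩ := h
  refine ⟨u.length + j, ?_, ?_, ?_⟩
  · rw [List.getElem?_append_right (by omega), Nat.add_sub_cancel_left]; exact h1
  · rw [show u.length + j + 1 = u.length + (j + 1) by omega,
      List.getElem?_append_right (by omega), Nat.add_sub_cancel_left]; exact h2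
  · rw [show u.length + j + 1 = u.length + (j + 1) by omega, List.drop_append]
    simpa [List.drop_eq_nil_of_le (show u.length ≤ u.length + (j + 1) by omega)] using h3

lemma loopEraseStep_self (acc : List V) (x : V) (h : acc.head? = some x) :
    loopEraseStep acc x = [x] := by
  cases acc with
  | nil => simp at h
  | cons a acc =>
    obtain rfl : a = x := by simpa using h
    simp [loopEraseStep, List.takeWhile_cons]

lemma loopEraseStep_cons' (acc : List V) (x y : V) (hyx : y ≠ x) :
    loopEraseStep (x :: acc) y = x :: loopEraseStep acc y := by
  unfold loopEraseStep
  by_cases hy : y ∈ acc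
  · simp [hy, hyx, List.takeWhile_cons, Ne.symm hyx]
  · simp [hy, hyx, Ne.symm hyx]

lemma loopEraseStep_head? (acc : List V) (y x : V) (h : acc.head? = some x) :
    (loopEraseStep acc y).head? = some x := by
  cases acc with
  | nil => simp at h
  | cons a acc =>
    obtain rfl : a = x := by simpa using h
    by_cases hyx : y = a
    · rw [hyx, loopEraseStep_self (a :: acc) a rfl]; rfl
    · rw [loopEraseStep_cons' acc a y hyx]; rfl

lemma foldl_loopEraseStep_head? (l : List V) (acc : List V) (x : V) (h : acc.head? = some x) :
    (l.foldl loopEraseStep acc).head? = some x := by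
  induction l generalizing acc with
  | nil => exact h
  | cons y l ih => exact ih _ (loopEraseStep_head? acc y x h)

lemma foldl_cons_of_not_mem (x : V) (l : List V) (hx : x ∉ l) (acc : List V) :
    l.foldl loopEraseStep (x :: acc) = x :: l.foldl loopEraseStep acc := by
  induction l generalizing acc with
  | nil => rfl
  | cons y l ih =>
    have hyx : y ≠ x := fun h => hx (h ▸ List.mem_cons_self)
    have hxl : x ∉ l := fun h => hx (List.mem_cons_of_mem _ h)
    simp only [List.foldl_cons, loopEraseStep_cons' acc x y hyx]
    exact ih hxl _

lemma loopErase_cons_of_not_mem (x : V) (l : List V) (hx : x ∉ l) :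
    loopErase (x :: l) = x :: loopErase l := by
  unfold loopErase
  rw [List.foldl_cons, show loopEraseStep [] x = [x] by simp [loopEraseStep]]
  exact foldl_cons_of_not_mem x l hx []

lemma exists_last_split {x : V} : ∀ {l : List V}, x ∈ l → ∃ s t, l = s ++ x :: t ∧ x ∉ t := by
  intro l
  induction l with
  | nil => simp
  | cons y l ih =>
    intro h
    by_cases hx : x ∈ l
    · obtain ⟨s, t, rfl, ht⟩ := ih hx
      exact ⟨y :: s, t, rfl, ht⟩
    · have hxy : x = y := by
        rcases List.mem_cons.1 h with h' | h'
        · exact h'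
        · exact absurd h' hx
      exact ⟨[], l, by rw [hxy]; rfl, hx⟩

lemma loopErase_split (x : V) (s t : List V) (ht : x ∉ t) :
    loopErase (x :: (s ++ x :: t)) = x :: loopErase t := by
  unfold loopErase
  rw [List.foldl_cons, show loopEraseStep [] x = [x] by simp [loopEraseStep]]
  rw [show s ++ x :: t = (s ++ [x]) ++ t by simp, List.foldl_append, List.foldl_append]
  have hA : (List.foldl loopEraseStep [x] s).head? = some x :=
    foldl_loopEraseStep_head? s [x] x rfl
  rw [show List.foldl loopEraseStep (List.foldl loopEraseStep [x] s) [x] = [x] by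
    simpa using loopEraseStep_self _ _ hA]
  exact foldl_cons_of_not_mem x t ht []

lemma loopErase_spec : ∀ (n : ℕ) (l : List V), l.length ≤ n →
    (loopErase l).head? = l.head? ∧ (loopErase l).getLast? = l.getLast? ∧
      List.Chain' (lastExit l) (loopErase l) := by
  intro n
  induction n with
  | zero =>
    intro l hl
    obtain rfl : l = [] := List.length_eq_zero_iff.mp (Nat.le_zero.mp hl)
    exact ⟨rfl, rfl, List.isChain_nil⟩
  | succ n ih =>
    intro l hl
    match l with
    | [] => exact ⟨rfl, rfl, List.isChain_nil⟩
    | x :: rest =>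
      by_cases hx : x ∈ rest
      · obtain ⟨s, t, rfl, ht⟩ := exists_last_split hx
        have hlen : t.length ≤ n := by
          simp only [List.length_cons, List.length_append] at hl; omega
        obtain ⟨ih1, ih2, ih3⟩ := ih t hlen
        rw [loopErase_split x s t ht]
        refine ⟨rfl, ?_, ?_⟩
        · cases t with
          | nil =>
            show ([x] : List V).getLast? = _
            rw [show x :: (s ++ x :: ([] : List V)) = (x :: s) ++ [x] from by simp,
              List.getLast?_concat]
            rfl
          | cons y t' =>
            have hne : loopErase (y :: t') ≠ [] := by
              intro h; rw [h] at ih1; simp at ih1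
            obtain ⟨z, L, hL⟩ := List.exists_cons_of_ne_nil hne
            rw [hL, List.getLast?_cons_cons, ← hL, ih2,
              show x :: (s ++ x :: y :: t') = (x :: s ++ [x]) ++ (y :: t') by simp,
              List.getLast?_append]
            cases h' : (y :: t').getLast? with
            | none => simp at h'
            | some z' => rfl
        · apply List.isChain_cons.mpr
          constructor
          · intro y hy
            rw [ih1] at hy
            refine ⟨s.length + 1, ?_, ?_, ?_⟩
            · rw [show x :: (s ++ x :: t) = (x :: s) ++ (x :: t) by simp,
                List.getElem?_append_right (by simp)]
              simp
            · rw [show x :: (s ++ x :: t) = (x :: s) ++ (x :: t) by simp,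
                show s.length + 1 + 1 = (x :: s).length + 1 by simp,
                List.getElem?_append_right (by omega), Nat.add_sub_cancel_left,
                List.getElem?_cons_succ, ← List.head?_eq_getElem?]
              exact hy
            · rw [show x :: (s ++ x :: t) = (x :: s) ++ (x :: t) by simp,
                show s.length + 1 + 1 = (x :: s).length + 1 by simp, List.drop_append]
              simpa [List.drop_eq_nil_of_le (show s.length ≤ s.length + 1 by omega)] using ht
          · refine ih3.imp ?_
            intro a b hab
            have := lastExit_append ((x :: s) ++ [x]) t hab
            rw [show ((x :: s) ++ [x]) ++ t = x :: (s ++ x :: t) by simp] at this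
            exact this
      · rw [loopErase_cons_of_not_mem x rest hx]
        have hlen : rest.length ≤ n := by simpa using hl
        obtain ⟨ih1, ih2, ih3⟩ := ih rest hlen
        refine ⟨rfl, ?_, ?_⟩
        · cases rest with
          | nil => simp [loopErase]
          | cons y t' =>
            have hne : loopErase (y :: t') ≠ [] := by
              intro h; rw [h] at ih1; simp at ih1
            obtain ⟨z, L, hL⟩ := List.exists_cons_of_ne_nil hne
            rw [hL, List.getLast?_cons_cons, ← hL, ih2, List.getLast?_cons_cons]
        · apply List.isChain_cons.mpr
          constructor
          · intro y hy
            rw [ih1] at hy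
            refine ⟨0, rfl, ?_, ?_⟩
            · rw [List.getElem?_cons_succ, ← List.head?_eq_getElem?]; exact hy
            · simpa using hx
          · refine ih3.imp ?_
            intro a b hab
            exact lastExit_append [x] rest hab

lemma feEdge_unique {l : List V} {a b c : V} (h1 : feEdge l a b) (h2 : feEdge l c b) :
    a = c := by
  obtain ⟨i, ha, hb, hnb⟩ := h1
  obtain ⟨i', hc, hb', hnb'⟩ := h2
  have hii : i = i' := by
    by_contra hne
    rcases Nat.lt_or_ge i i' with h | h
    · refine hnb' (List.mem_iff_getElem?.mpr ⟨i + 1, ?_⟩)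
      rw [List.getElem?_take_of_lt (by omega : i + 1 < i' + 1)]; exact hb
    · have h' : i' < i := by omega
      refine hnb (List.mem_iff_getElem?.mpr ⟨i' + 1, ?_⟩)
      rw [List.getElem?_take_of_lt (by omega : i' + 1 < i + 1)]; exact hb'
  rw [hii, hc] at ha
  exact (Option.some.inj ha).symm

lemma feEdge_ne_head {l : List V} {a b v : V} (h : feEdge l a b) (hv : l.head? = some v) :
    b ≠ v := by
  obtain ⟨i, ha, hb, hnb⟩ := h
  rintro rfl
  apply hnb
  have h0 : l[0]? = some b := by rw [← List.head?_eq_getElem?]; exact hv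
  refine List.mem_iff_getElem?.mpr ⟨0, ?_⟩
  rw [List.getElem?_take_of_lt (Nat.succ_pos i)]; exact h0

lemma lastExit_reverse_feEdge {γ : List V} {a b : V} (h : lastExit γ.reverse a b) :
    feEdge γ b a := by
  obtain ⟨j, ha, hb, hnd⟩ := h
  have hj1 : j + 1 < γ.length := by
    by_contra h'
    rw [List.getElem?_eq_none (by simpa using by omega : γ.reverse.length ≤ j + 1)] at hb
    simp at hb
  set n := γ.length with hn
  have ha' : γ[n - 1 - j]? = some a := by
    rwa [List.getElem?_reverse (by omega)] at ha
  have hb' : γ[n - 1 - (j + 1)]? = some b := by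
    rwa [List.getElem?_reverse (by omega)] at hb
  refine ⟨n - 2 - j, ?_, ?_, ?_⟩
  · rwa [show n - 2 - j = n - 1 - (j + 1) by omega]
  · rwa [show n - 2 - j + 1 = n - 1 - j by omega]
  · intro hmem
    obtain ⟨k, hk⟩ := List.mem_iff_getElem?.mp hmem
    have hk2 : k < n - 2 - j + 1 := by
      by_contra hk2
      rw [List.getElem?_eq_none (by
        rw [List.length_take]; omega)] at hk
      simp at hk
    have hγk : γ[k]? = some a := by rw [← List.getElem?_take_of_lt hk2]; exact hk
    apply hnd
    have hrev : γ.reverse[n - 1 - k]? = some a := by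
      rw [List.getElem?_reverse (by omega), show n - 1 - (n - 1 - k) = k by omega]
      exact hγk
    refine List.mem_iff_getElem?.mpr ⟨n - 1 - k - (j + 1), ?_⟩
    rw [List.getElem?_drop, show j + 1 + (n - 1 - k - (j + 1)) = n - 1 - k by omega]
    exact hrev

lemma chain_parent {γ : List V} {v : V} (hv : γ.head? = some v) :
    ∀ β : List V, β.Nodup → β.Chain' (feGraph γ).Adj → β.getLast? = some v →
      β.Chain' (fun a b => feEdge γ b a) := by
  intro β
  induction β with
  | nil => intro _ _ _; exact List.isChain_nil
  | cons a β ih =>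
    intro hnd hch hlast
    cases β with
    | nil => exact List.isChain_singleton a
    | cons b β' =>
      have hlast' : (b :: β').getLast? = some v := by
        rwa [List.getLast?_cons_cons] at hlast
      have ihh := ih (List.nodup_cons.mp hnd).2 (List.isChain_cons_cons.mp hch).2 hlast'
      apply List.isChain_cons_cons.mpr
      refine ⟨?_, ihh⟩
      obtain ⟨hne, h | h⟩ := (List.isChain_cons_cons.mp hch).1
      · exfalso
        cases β' with
        | nil =>
          have hbv : b = v := by simpa using hlast'
          exact feEdge_ne_head h hv hbv
        | cons c β'' =>
          have hcb : feEdge γ c b := (List.isChain_cons_cons.mp ihh).1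
          have hac : a = c := feEdge_unique h hcb
          exact (List.nodup_cons.mp hnd).1
            (hac ▸ List.mem_cons_of_mem _ (List.mem_cons_self))
      · exact h

lemma parent_chain_unique {γ : List V} {v : V} (hv : γ.head? = some v) :
    ∀ l₁ l₂ : List V, l₁.Chain' (fun a b => feEdge γ b a) →
      l₂.Chain' (fun a b => feEdge γ b a) →
      l₁.head? = l₂.head? → l₁.getLast? = some v → l₂.getLast? = some v → l₁ = l₂ := by
  intro l₁
  induction l₁ with
  | nil => intro l₂ _ _ hh h1 _; exact absurd h1 (by simp)
  | cons a l₁ ih =>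
    intro l₂ hc1 hc2 hh h1 h2
    cases l₂ with
    | nil => exact absurd h2 (by simp)
    | cons a' l₂ =>
      obtain rfl : a = a' := by simpa using hh
      cases l₁ with
      | nil =>
        have hav : a = v := by simpa using h1
        cases l₂ with
        | nil => rfl
        | cons b l₂ =>
          exfalso
          have hba : feEdge γ b a := (List.isChain_cons_cons.mp hc2).1
          exact feEdge_ne_head hba hv hav
      | cons b l₁ =>
        cases l₂ with
        | nil =>
          exfalso
          have hav : a = v := by simpa using h2
          have hba : feEdge γ b a := (List.isChain_cons_cons.mp hc1).1
          exact feEdge_ne_head hba hv hav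
        | cons b' l₂ =>
          have hb : feEdge γ b a := (List.isChain_cons_cons.mp hc1).1
          have hb' : feEdge γ b' a := (List.isChain_cons_cons.mp hc2).1
          obtain rfl : b = b' := feEdge_unique hb hb'
          have heq := ih (b :: l₂) (List.isChain_cons_cons.mp hc1).2 (List.isChain_cons_cons.mp hc2).2
            rfl (by rwa [List.getLast?_cons_cons] at h1)
            (by rwa [List.getLast?_cons_cons] at h2)
          rw [heq]

end Aux

/-- let `γ` be a finite walk from `v` to `w` (`v ≠ w`) in a finite graph `G`,
and let `T(γ)` be the first-entry subgraph. Assuming `T(γ)` restricted to the vertices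
visited by `γ` is a tree, the unique self-avoiding path from `w` to `v` in `T(γ)` equals
the loop-erasure `LE(γ')` of the time-reversed walk `γ'`. -/
theorem path_in_firstEntryTree_eq_loopErase_of_reverse
    {V : Type*} [Fintype V] [DecidableEq V] (G : SimpleGraph V) (v w : V) (hvw : v ≠ w)
    (γ : List V) (hwalk : γ.Chain' G.Adj) (hv : γ.head? = some v) (hw : γ.getLast? = some w)
    (htree : ((feGraph γ).induce {x : V | x ∈ γ}).IsTree) :
    ∀ β : List V, β.Nodup → β.Chain' (feGraph γ).Adj →
      β.head? = some w → β.getLast? = some v →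
      β = loopErase γ.reverse := by
  intro β hnd hch hh hl
  obtain ⟨hH, hL, hC⟩ := loopErase_spec γ.reverse.length γ.reverse le_rfl
  have hH' : (loopErase γ.reverse).head? = some w := by
    rw [hH, List.head?_reverse]; exact hw
  have hL' : (loopErase γ.reverse).getLast? = some v := by
    rw [hL, List.getLast?_reverse]; exact hv
  have hC' : (loopErase γ.reverse).Chain' (fun a b => feEdge γ b a) :=
    hC.imp (fun a b hab => lastExit_reverse_feEdge hab)
  have hβ : β.Chain' (fun a b => feEdge γ b a) := chain_parent hv β hnd hch hl
  exact parent_chain_unique hv β (loopErase γ.reverse) hβ hC' (by rw [hh, hH']) hl hL'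
end

section
/- Let γ be a walk of the form γ = γ₂' * γ₁', the concatenation of two walks meeting at a vertex x, where x occurs exactly once in LE(γ₂') * γ₁' (at the junction). Then x survives loop-erasure of γ, i.e. x lies on LE(γ), if and only if the walk γ₁' intersects LE(γ₂') only at x. -/
section Aux

variable {V : Type*} [DecidableEq V]

lemma takeWhile_ne_append_of_mem {y : V} (P r : List V) (h : y ∈ P) :
    (P ++ r).takeWhile (· ≠ y) = P.takeWhile (· ≠ y) := by
  rw [List.takeWhile_append, if_neg]
  intro hlen
  have heq := (List.takeWhile_prefix (l := P) (· ≠ y)).eq_of_length hlen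
  have := List.mem_takeWhile_imp (heq ▸ h)
  simp at this

lemma takeWhile_ne_append_of_not_mem {y : V} (P r : List V) (h : y ∉ P) :
    (P ++ r).takeWhile (· ≠ y) = P ++ r.takeWhile (· ≠ y) := by
  have hP : P.takeWhile (· ≠ y) = P := by
    rw [List.takeWhile_eq_self_iff]
    intro z hz
    simp only [decide_eq_true_eq]
    exact fun e => h (e ▸ hz)
  rw [List.takeWhile_append, hP, if_pos rfl]

lemma not_mem_foldl_loopEraseStep (x : V) : ∀ (t acc : List V), x ∉ acc → x ∉ t →
    x ∉ List.foldl loopEraseStep acc t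
  | [], _, ha, _ => ha
  | y :: t, acc, ha, ht => by
    rw [List.foldl_cons]
    refine not_mem_foldl_loopEraseStep x t _ ?_ (fun h => ht (List.mem_cons_of_mem _ h))
    intro h
    have hyx : x ≠ y := fun e => ht (e ▸ List.mem_cons_self ..)
    unfold loopEraseStep at h
    split at h <;> rcases List.mem_append.mp h with h | h
    · exact ha ((List.takeWhile_prefix _).subset h)
    · exact hyx (by simpa using h)
    · exact ha h
    · exact hyx (by simpa using h)

lemma key_loopErase (x : V) : ∀ (t S P : List V), x ∉ t → x ∉ S → x ∉ P →
    (x ∈ List.foldl loopEraseStep (P ++ x :: S) t ↔ ∀ y ∈ t, y ∉ P)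
  | [], S, P, _, _, _ => by simp
  | y :: t, S, P, hxt, hxS, hxP => by
    have hyx : y ≠ x := fun h => hxt (h ▸ List.mem_cons_self ..)
    have hxt' : x ∉ t := fun h => hxt (List.mem_cons_of_mem _ h)
    rw [List.foldl_cons]
    by_cases hyP : y ∈ P
    · -- x gets erased at this step and never returns
      have hstep : loopEraseStep (P ++ x :: S) y = P.takeWhile (· ≠ y) ++ [y] := by
        unfold loopEraseStep
        rw [if_pos (List.mem_append_left _ hyP), takeWhile_ne_append_of_mem P _ hyP]
      rw [hstep]
      constructor
      · intro hmem
        exfalso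
        refine not_mem_foldl_loopEraseStep x t _ ?_ hxt' hmem
        intro hx
        rcases List.mem_append.mp hx with h | h
        · exact hxP ((List.takeWhile_prefix _).subset h)
        · exact hyx (show x = y by simpa using h).symm
      · intro h
        exact absurd hyP (h y (List.mem_cons_self ..))
    · -- x survives this step
      obtain ⟨S', hxS', hstep⟩ :
          ∃ S', x ∉ S' ∧ loopEraseStep (P ++ x :: S) y = P ++ x :: S' := by
        unfold loopEraseStep
        split
        · rename_i hmem
          have hyS : y ∈ S := by
            rcases List.mem_append.mp hmem with h | h
            · exact absurd h hyP
            · rcases List.mem_cons.mp h with h | h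
              · exact absurd h hyx
              · exact h
          refine ⟨S.takeWhile (· ≠ y) ++ [y], ?_, ?_⟩
          · intro h
            rcases List.mem_append.mp h with h | h
            · exact hxS ((List.takeWhile_prefix _).subset h)
            · exact hyx (show x = y by simpa using h).symm
          · rw [takeWhile_ne_append_of_not_mem _ _ hyP, List.takeWhile_cons,
              if_pos (by simpa using (Ne.symm hyx))]
            simp
        · refine ⟨S ++ [y], ?_, ?_⟩
          · intro h
            rcases List.mem_append.mp h with h | h
            · exact hxS h
            · exact hyx (show x = y by simpa using h).symm
          · simp
      rw [hstep, key_loopErase x t S' P hxt' hxS' hxP]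
      constructor
      · intro h z hz
        rcases List.mem_cons.mp hz with rfl | hz
        · exact hyP
        · exact h z hz
      · intro h z hz
        exact h z (List.mem_cons_of_mem _ hz)

end Aux

/-- let `γ = γ₂' * γ₁'` be the concatenation of two walks meeting at a vertex
`x` (so `γ₂'` ends at `x` and `γ₁'` starts at `x`), and suppose `x` occurs exactly once in
`LE(γ₂') * γ₁'` (at the junction). Then `x` survives loop-erasure of `γ`, i.e. `x` lies on
`LE(γ)`, if and only if the walk `γ₁'` intersects `LE(γ₂')` only at `x`. -/
theorem junction_survives_loopErase_iff
    {V : Type*} [DecidableEq V] (G : SimpleGraph V) (γ₂' γ₁' : List V) (x : V)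
    (h₂ : γ₂'.Chain' G.Adj) (h₁ : γ₁'.Chain' G.Adj)
    (hx₂ : γ₂'.getLast? = some x) (hx₁ : γ₁'.head? = some x)
    (honce : (loopErase γ₂' ++ γ₁'.tail).count x = 1) :
    x ∈ loopErase (γ₂' ++ γ₁'.tail) ↔
      ∀ y ∈ γ₁', y ∈ loopErase γ₂' → y = x := by
  -- γ₁' = x :: its tail
  have hγ₁ : γ₁' = x :: γ₁'.tail := by
    cases γ₁' with
    | nil => simp at hx₁
    | cons a t => simp only [List.head?_cons, Option.some.injEq] at hx₁; simp [hx₁]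
  set t := γ₁'.tail with ht
  -- loopErase γ₂' ends with x
  have hLlast : ∃ Q, loopErase γ₂' = Q ++ [x] := by
    have hne₂ : γ₂' ≠ [] := by intro h; simp [h] at hx₂
    have hlast : γ₂'.getLast hne₂ = x := by
      have := List.getLast?_eq_getLast hne₂
      rw [hx₂] at this
      exact (Option.some.injEq _ _ ▸ this).symm
    have hsplit : γ₂' = γ₂'.dropLast ++ [x] := by
      conv_lhs => rw [← List.dropLast_append_getLast hne₂]
      rw [hlast]
    obtain ⟨Q, hQ⟩ : ∃ Q, loopEraseStep (List.foldl loopEraseStep [] γ₂'.dropLast) x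
        = Q ++ [x] := by
      unfold loopEraseStep; split <;> exact ⟨_, rfl⟩
    refine ⟨Q, ?_⟩
    conv_lhs => rw [loopErase, hsplit]
    rw [List.foldl_append]
    simpa using hQ
  obtain ⟨Q, hQ⟩ := hLlast
  -- extract the count information
  rw [hQ, List.count_append, List.count_append] at honce
  simp only [List.count_singleton, beq_self_eq_true, if_true] at honce
  have hxQ : x ∉ Q := List.count_eq_zero.mp (by omega)
  have hxt : x ∉ t := List.count_eq_zero.mp (by omega)
  -- rewrite the loop erasure of the concatenation
  have hfold : loopErase (γ₂' ++ t) = List.foldl loopEraseStep (loopErase γ₂') t := by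
    unfold loopErase
    rw [List.foldl_append]
  rw [hfold, hQ]
  have hkey := key_loopErase x t [] Q hxt (by simp) hxQ
  rw [show Q ++ [x] = Q ++ x :: ([] : List V) from rfl, hkey]
  constructor
  · intro h y hy hyL
    rw [hγ₁] at hy
    rcases List.mem_cons.mp hy with rfl | hy
    · rfl
    · rcases List.mem_append.mp hyL with h' | h'
      · exact absurd h' (h y hy)
      · simpa using h'
  · intro h y hy hyQ
    have hmem : y ∈ γ₁' := by rw [hγ₁]; exact List.mem_cons_of_mem _ hy
    have heq : y = x := h y hmem (List.mem_append_left _ hyQ)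
    exact hxQ (heq ▸ hyQ)
end

section
/- Loop-erasure is idempotent and absorbs inner loop-erasure under concatenation: for finite walks β and δ with the endpoint of β equal to the start of δ, LE(β * δ) = LE(LE(β) * δ). -/
lemma loopEraseStep_nodup {V : Type*} [DecidableEq V] {acc : List V} (h : acc.Nodup) (x : V) :
    (loopEraseStep acc x).Nodup := by
  unfold loopEraseStep
  split
  · refine List.Nodup.append ((acc.takeWhile_sublist _).nodup h) (List.nodup_singleton x) ?_
    intro a ha hb
    simp only [List.mem_singleton] at hb
    subst hb
    have := List.mem_takeWhile_imp ha
    simp at this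
  · refine List.Nodup.append h (List.nodup_singleton x) ?_
    intro a ha hb
    simp only [List.mem_singleton] at hb
    subst hb
    simp_all

lemma foldl_loopEraseStep_nodup {V : Type*} [DecidableEq V] (l : List V) :
    ∀ acc : List V, acc.Nodup → (l.foldl loopEraseStep acc).Nodup := by
  induction l with
  | nil => intro acc h; exact h
  | cons a l ih => intro acc h; exact ih _ (loopEraseStep_nodup h a)

lemma loopErase_nodup {V : Type*} [DecidableEq V] (l : List V) : (loopErase l).Nodup :=
  foldl_loopEraseStep_nodup l [] List.nodup_nil

lemma foldl_loopEraseStep_of_nodup {V : Type*} [DecidableEq V] (l : List V) :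
    ∀ acc : List V, (acc ++ l).Nodup → l.foldl loopEraseStep acc = acc ++ l := by
  induction l with
  | nil => intro acc _; simp
  | cons a l ih =>
    intro acc h
    have ha : a ∉ acc := by
      intro hmem
      exact (List.nodup_append'.mp h).2.2 hmem (by simp)
    simp only [List.foldl_cons, loopEraseStep, if_neg ha]
    have := ih (acc ++ [a]) (by simpa using h)
    simpa using this

lemma loopErase_idem {V : Type*} [DecidableEq V] (l : List V) :
    loopErase (loopErase l) = loopErase l := by
  have := foldl_loopEraseStep_of_nodup (loopErase l) [] (by simpa using loopErase_nodup l)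
  simpa [loopErase] using this

/-- loop-erasure absorbs inner loop-erasure under concatenation: for finite
walks `β` and `δ` with the endpoint of `β` equal to the start of `δ`,
`LE(β * δ) = LE(LE(β) * δ)`.  (Concatenation at the shared endpoint is `β ++ δ.tail`.) -/
theorem loopErase_append_loopErase
    {V : Type*} [DecidableEq V] (G : SimpleGraph V) (β δ : List V) (x : V)
    (hβ : β.Chain' G.Adj) (hδ : δ.Chain' G.Adj)
    (hβx : β.getLast? = some x) (hδx : δ.head? = some x) :
    loopErase (β ++ δ.tail) = loopErase (loopErase β ++ δ.tail) := by
  unfold loopErase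
  rw [List.foldl_append, List.foldl_append]
  congr 1
  exact (foldl_loopEraseStep_of_nodup (loopErase β) []
    (by simpa using loopErase_nodup β)).symm ▸ rfl
end
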